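/- arXiv:0903.0830 — 3 statements merged into one kernel-verified Lean document; each statement's English description precedes it below -/
import Mathlib

section
/- Let A be a von Neumann algebra, σ, τ : A → A algebra homomorphisms, M a Banach A-bimodule, and d : A → M a linear map such that d(p) = σ(p)d(p) + d(p)τ(p) for every projection p in A. Then for any two orthogonal projections p, q in A (i.e. pq = qp = 0), one has σ(p)d(q) + d(p)τ(q) + σ(q)d(p) + d(q)τ(p) = 0. -/
noncomputable instance VonNeumannAlgebra.instNormedAlgebraCarrier
    {H : Type*} [NormedAddCommGroup H] [InnerProductSpace ℂ H] [CompleteSpace H]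
    (A : VonNeumannAlgebra H) : NormedAlgebra ℂ ↥A :=
  inferInstanceAs (NormedAlgebra ℂ ↥A.toStarSubalgebra)

open MulOpposite in
theorem cross_terms_eq_zero_of_leibniz_add {R M : Type*} [Semiring R] [AddCommGroup M]
    [Module R M] [Module Rᵐᵒᵖ M] (σ τ : R →+ R) (d : R →+ M) {p q : R}
    (hp : d p = σ p • d p + op (τ p) • d p) (hq : d q = σ q • d q + op (τ q) • d q)
    (hpq : d (p + q) = σ (p + q) • d (p + q) + op (τ (p + q)) • d (p + q)) :
    σ p • d q + op (τ q) • d p + σ q • d p + op (τ p) • d q = 0 := by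
  simp only [map_add, op_add, add_smul, smul_add] at hpq
  linear_combination (norm := abel) hp + hq - hpq

open MulOpposite in
theorem stmt4_general {H : Type*} [NormedAddCommGroup H] [InnerProductSpace ℂ H] [CompleteSpace H]
    (A : VonNeumannAlgebra H)
    {M : Type*} [NormedAddCommGroup M] [NormedSpace ℂ M]
    [Module ↥A M] [Module (↥A)ᵐᵒᵖ M]
    (σ τ : ↥A →ₐ[ℂ] ↥A) (d : ↥A →ₗ[ℂ] M)
    (hd : ∀ p : ↥A, IsIdempotentElem p → IsSelfAdjoint p →
      d p = σ p • d p + op (τ p) • d p)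
    (p q : ↥A) (hp : IsIdempotentElem p) (hp' : IsSelfAdjoint p)
    (hq : IsIdempotentElem q) (hq' : IsSelfAdjoint q)
    (hpq : p * q = 0) (hqp : q * p = 0) :
    σ p • d q + op (τ q) • d p + σ q • d p + op (τ p) • d q = 0 := by
  have hidem : IsIdempotentElem (p + q) := hp.add hq (by rw [hpq, hqp, add_zero])
  exact cross_terms_eq_zero_of_leibniz_add σ.toAddMonoidHom τ.toAddMonoidHom d.toAddMonoidHom
    (hd p hp hp') (hd q hq hq') (hd (p + q) hidem (hp'.add hq'))

open MulOpposite in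
/-- If `d` satisfies `d p = σ p • d p + d p • τ p` on projections of a von Neumann algebra,
then for orthogonal projections `p, q` one has
`σ p • d q + d p • τ q + σ q • d p + d q • τ p = 0`. -/
theorem stmt4 {H : Type*} [NormedAddCommGroup H] [InnerProductSpace ℂ H] [CompleteSpace H]
    (A : VonNeumannAlgebra H)
    {M : Type*} [NormedAddCommGroup M] [NormedSpace ℂ M] [CompleteSpace M]
    [Module ↥A M] [Module (↥A)ᵐᵒᵖ M] [SMulCommClass ↥A (↥A)ᵐᵒᵖ M]
    [IsScalarTower ℂ ↥A M] [IsScalarTower ℂ (↥A)ᵐᵒᵖ M]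
    [IsBoundedSMul ↥A M] [IsBoundedSMul (↥A)ᵐᵒᵖ M]
    (σ τ : ↥A →ₐ[ℂ] ↥A) (d : ↥A →ₗ[ℂ] M)
    (hd : ∀ p : ↥A, IsIdempotentElem p → IsSelfAdjoint p →
      d p = σ p • d p + op (τ p) • d p)
    (p q : ↥A) (hp : IsIdempotentElem p) (hp' : IsSelfAdjoint p)
    (hq : IsIdempotentElem q) (hq' : IsSelfAdjoint q)
    (hpq : p * q = 0) (hqp : q * p = 0) :
    σ p • d q + op (τ q) • d p + σ q • d p + op (τ p) • d q = 0 :=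
  stmt4_general A σ τ d hd p q hp hp' hq hq' hpq hqp
end

section
/- Let A be a von Neumann algebra, σ, τ : A → A algebra homomorphisms, M a Banach A-bimodule, and d : A → M a linear map such that d(p) = σ(p)d(p) + d(p)τ(p) for every projection p in A. Then for every finite linear combination a = Σ_{j=1}^{n} λ_j p_j of mutually orthogonal projections p_1, …, p_n in A with complex coefficients λ_j, one has d(a²) = σ(a)d(a) + d(a)τ(a). -/
open Finset in
theorem Finset.sum_sum_eq_sum_diag_of_add_swap_eq_zero {ι M : Type*} [Fintype ι] [DecidableEq ι]
    [AddCommMonoid M] (f : ι → ι → M) (hf : ∀ i j, i ≠ j → f i j + f j i = 0) :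
    ∑ i, ∑ j, f i j = ∑ i, f i i := by
  have hoff : ∑ x ∈ (univ : Finset ι).offDiag, f x.1 x.2 = 0 :=
    sum_involution (fun x _ ↦ x.swap) (fun x hx ↦ hf _ _ (mem_offDiag.1 hx).2.2)
      (fun x hx _ h ↦ (mem_offDiag.1 hx).2.2 congr(Prod.fst $h).symm)
      (fun x hx ↦ by simpa [and_comm, eq_comm] using hx) (fun x _ ↦ x.swap_swap)
  rw [← sum_product', ← diag_union_offDiag, sum_union (disjoint_diag_offDiag _), hoff, add_zero,
    sum_diag]

namespace LinearMap

variable {R E F : Type*} [CommSemiring R] [AddCommMonoid E] [Module R E]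

theorem map_sum_smul_sum_smul_of_add_swap_eq_zero [AddCommMonoid F] [Module R F] {ι : Type*}
    [Fintype ι] (B : E →ₗ[R] E →ₗ[R] F) (c : ι → R) (v : ι → E)
    (hv : ∀ i j, i ≠ j → B (v i) (v j) + B (v j) (v i) = 0) :
    B (∑ i, c i • v i) (∑ i, c i • v i) = ∑ i, (c i * c i) • B (v i) (v i) := by
  classical
  simp only [map_sum, map_smul, sum_apply, smul_apply, Finset.smul_sum, smul_smul]
  refine Finset.sum_sum_eq_sum_diag_of_add_swap_eq_zero _ fun i j hij ↦ ?_
  rw [mul_comm (c j), ← smul_add, add_comm, hv i j hij, smul_zero]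

theorem add_swap_eq_zero_of_eq_apply_self [AddCommGroup F] [Module R F] (B : E →ₗ[R] E →ₗ[R] F)
    (f : E →ₗ[R] F) {x y : E} (hx : f x = B x x) (hy : f y = B y y)
    (hxy : f (x + y) = B (x + y) (x + y)) :
    B x y + B y x = 0 :=
  calc B x y + B y x = B (x + y) (x + y) - B x x - B y y := by
        simp only [map_add, add_apply]; abel
    _ = 0 := by rw [← hx, ← hy, ← hxy, map_add]; abel

end LinearMap

section TwistedLeibniz

open MulOpposite

variable {R A M : Type*} [CommSemiring R] [Semiring A] [Algebra R A] [AddCommMonoid M]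
  [Module R M] [Module A M] [Module Aᵐᵒᵖ M] [IsScalarTower R A M] [IsScalarTower R Aᵐᵒᵖ M]

/-- The right-hand side `σ x • d y + d x • τ y` of the `(σ, τ)`-Leibniz rule for `d (x * y)`. -/
def twistedLeibniz (σ τ : A →ₗ[R] A) (d : A →ₗ[R] M) : A →ₗ[R] A →ₗ[R] M :=
  LinearMap.mk₂ R (fun x y ↦ σ x • d y + op (τ y) • d x)
    (fun x x' y ↦ by simp only [map_add, add_smul, smul_add]; abel)
    (fun c x y ↦ by simp only [map_smul, smul_assoc, smul_add, smul_comm (op (τ y)) c])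
    (fun x y y' ↦ by simp only [map_add, op_add, add_smul, smul_add]; abel)
    (fun c x y ↦ by simp only [map_smul, op_smul, smul_assoc, smul_add, smul_comm (σ x) c])

end TwistedLeibniz

open MulOpposite in
theorem stmt5_general {H : Type*} [NormedAddCommGroup H] [InnerProductSpace ℂ H] [CompleteSpace H]
    (A : VonNeumannAlgebra H)
    {M : Type*} [NormedAddCommGroup M] [NormedSpace ℂ M]
    [Module ↥A M] [Module (↥A)ᵐᵒᵖ M] [SMulCommClass ↥A (↥A)ᵐᵒᵖ M]
    [IsScalarTower ℂ ↥A M] [IsScalarTower ℂ (↥A)ᵐᵒᵖ M]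
    (σ τ : ↥A →ₐ[ℂ] ↥A) (d : ↥A →ₗ[ℂ] M)
    (hd : ∀ p : ↥A, IsIdempotentElem p → IsSelfAdjoint p →
      d p = σ p • d p + op (τ p) • d p)
    (n : ℕ) (lam : Fin n → ℂ) (p : Fin n → ↥A)
    (hp : ∀ j, IsIdempotentElem (p j)) (hp' : ∀ j, IsSelfAdjoint (p j))
    (horth : ∀ i j, i ≠ j → p i * p j = 0)
    (a : ↥A) (ha : a = ∑ j, lam j • p j) :
    d (a * a) = σ a • d a + op (τ a) • d a := by
  set G := twistedLeibniz σ.toLinearMap τ.toLinearMap d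
  have hproj : ∀ j, IsStarProjection (p j) := fun j ↦ ⟨hp j, hp' j⟩
  have hdiag : ∀ q, IsStarProjection q → d q = G q q := fun q hq ↦
    hd q hq.isIdempotentElem hq.isSelfAdjoint
  have hcross : ∀ i j, i ≠ j → G (p i) (p j) + G (p j) (p i) = 0 := fun i j hij ↦
    G.add_swap_eq_zero_of_eq_apply_self d (hdiag _ (hproj i)) (hdiag _ (hproj j))
      (hdiag _ ((hproj i).add (hproj j) (horth i j hij)))
  have hsq : a * a = ∑ j, (lam j * lam j) • p j := by
    simpa only [LinearMap.mul_apply', (hp _).eq, ha] using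
      (LinearMap.mul ℂ ↥A).map_sum_smul_sum_smul_of_add_swap_eq_zero lam p fun i j hij ↦ by
        simp [horth i j hij, horth j i hij.symm]
  calc d (a * a) = ∑ j, (lam j * lam j) • G (p j) (p j) := by
        simp only [hsq, map_sum, map_smul, ← hdiag _ (hproj _)]
    _ = G a a := by rw [ha, G.map_sum_smul_sum_smul_of_add_swap_eq_zero lam p hcross]

open MulOpposite in
/-- If `d` satisfies `d p = σ p • d p + d p • τ p` on projections of a von Neumann algebra,
then `d (a²) = σ a • d a + d a • τ a` for every finite complex linear combination `a`
of mutually orthogonal projections. -/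
theorem stmt5 {H : Type*} [NormedAddCommGroup H] [InnerProductSpace ℂ H] [CompleteSpace H]
    (A : VonNeumannAlgebra H)
    {M : Type*} [NormedAddCommGroup M] [NormedSpace ℂ M] [CompleteSpace M]
    [Module ↥A M] [Module (↥A)ᵐᵒᵖ M] [SMulCommClass ↥A (↥A)ᵐᵒᵖ M]
    [IsScalarTower ℂ ↥A M] [IsScalarTower ℂ (↥A)ᵐᵒᵖ M]
    [IsBoundedSMul ↥A M] [IsBoundedSMul (↥A)ᵐᵒᵖ M]
    (σ τ : ↥A →ₐ[ℂ] ↥A) (d : ↥A →ₗ[ℂ] M)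
    (hd : ∀ p : ↥A, IsIdempotentElem p → IsSelfAdjoint p →
      d p = σ p • d p + op (τ p) • d p)
    (n : ℕ) (lam : Fin n → ℂ) (p : Fin n → ↥A)
    (hp : ∀ j, IsIdempotentElem (p j)) (hp' : ∀ j, IsSelfAdjoint (p j))
    (horth : ∀ i j, i ≠ j → p i * p j = 0)
    (a : ↥A) (ha : a = ∑ j, lam j • p j) :
    d (a * a) = σ a • d a + op (τ a) • d a :=
  stmt5_general A σ τ d hd n lam p hp hp' horth a ha
end

section
/- Let A be a unital complex Banach algebra, M a Banach A-bimodule, S ∈ A, τ : A → A a bounded algebra homomorphism such that τ(S) is a right separating point of M, σ : A → A a bounded Jordan homomorphism, and f : A → M a bounded linear map satisfying f(ab) = σ(a)f(b) + f(a)τ(b) for all a, b ∈ A with ab = S. Then f is a (σ,τ)-Jordan derivation, and moreover f(Sa) = σ(S)f(a) + f(S)τ(a) and f(aS) = σ(a)f(S) + f(a)τ(S) for all a ∈ A. -/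
/-!
Write `Φ x y = σ x • f y + f x • τ y`, a bounded bilinear map; the hypothesis says `Φ x y = f S`
whenever `x * y = S`. Hence for every factorization `x * y = S` the map
`s ↦ Φ (x * exp (s • a)) (exp (-s • a) * y)` is constant, and its first two derivatives at `0`
give `Φ (x * a) y = Φ x (a * y)` and `Φ (x * a) (a * y) = Φ x (a * a * y)`. Taking `(x, y)` to be
`(1, S)` or `(S, 1)`, using that `σ 1` is a unit for the range of the Jordan map `σ`, and
cancelling the right separating point `τ S`, one gets `f x = Φ 1 x` for all `x`, and from it the
three identities.
-/

open MulOpposite NormedSpace ContinuousLinearMap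

section JordanMap

variable {R R' F : Type*} [Ring R] [Ring R'] [FunLike F R R'] [AddMonoidHomClass F R R']
  {σ : F}

lemma map_add_map_eq_of_map_mul_self (hσ : ∀ a, σ (a * a) = σ a * σ a) (x : R) :
    σ x + σ x = σ 1 * σ x + σ x * σ 1 := by
  have h := hσ (x + 1)
  simp only [add_mul, mul_add, one_mul, mul_one, map_add, hσ x, ← hσ 1] at h
  rw [← add_right_inj (σ x * σ x), ← add_left_inj (σ 1)]
  convert h using 1 <;> abel

variable [IsAddTorsionFree R']

lemma map_one_mul_map_of_map_mul_self (hσ : ∀ a, σ (a * a) = σ a * σ a) (x : R) :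
    σ 1 * σ x = σ x := by
  have h := map_add_map_eq_of_map_mul_self hσ x
  have he : σ 1 * σ 1 = σ 1 := by rw [← hσ, one_mul]
  have hl : σ 1 * σ x = σ 1 * σ x * σ 1 := by
    have := congrArg (σ 1 * ·) h
    simp only [mul_add, ← mul_assoc, he] at this
    exact add_left_cancel this
  have hr : σ x * σ 1 = σ 1 * σ x * σ 1 := by
    have := congrArg (· * σ 1) h
    simp only [add_mul, mul_assoc, he] at this
    rw [← mul_assoc] at this
    exact add_right_cancel this
  rw [hr, ← hl, ← two_nsmul, ← two_nsmul] at h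
  exact (nsmul_right_injective two_ne_zero h).symm

lemma map_mul_map_one_of_map_mul_self (hσ : ∀ a, σ (a * a) = σ a * σ a) (x : R) :
    σ x * σ 1 = σ x := by
  have h := map_add_map_eq_of_map_mul_self hσ x
  rw [map_one_mul_map_of_map_mul_self hσ] at h
  exact (add_left_cancel h).symm

end JordanMap

section Factorizations

variable {𝕂 A M : Type*} [RCLike 𝕂] [NormedRing A] [NormedAlgebra 𝕂 A] [CompleteSpace A]
  [NormedAddCommGroup M] [NormedSpace 𝕂 M]

def IsConstOnFactorizations (B : A →L[𝕂] A →L[𝕂] M) (S : A) : Prop :=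
  ∀ x y, x * y = S → B x y = B 1 S

lemma hasDerivAt_apply_mul_exp_smul (B : A →L[𝕂] A →L[𝕂] M) (x y a : A) (t : 𝕂) :
    HasDerivAt (fun s : 𝕂 ↦ B (x * exp (s • a)) (exp ((-s) • a) * y))
      (B (x * exp (t • a) * a) (exp ((-t) • a) * y) -
        B (x * exp (t • a)) (exp ((-t) • a) * (a * y))) t := by
  have hu : HasDerivAt (fun s : 𝕂 ↦ x * exp (s • a)) (x * (exp (t • a) * a)) t :=
    (hasDerivAt_exp_smul_const a t).const_mul x
  have hv : HasDerivAt (fun s : 𝕂 ↦ exp ((-s) • a) * y) ((-1 : 𝕂) • (exp ((-t) • a) * a) * y) t :=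
    ((hasDerivAt_exp_smul_const a (-t)).scomp t (hasDerivAt_neg t)).mul_const y
  convert B.hasDerivAt_of_bilinear (fun _ ↦ hu) (fun _ ↦ hv) using 1
  simp only [neg_smul, one_smul, neg_mul, map_neg, mul_assoc]
  abel

lemma exp_smul_mul_exp_neg_smul (a : A) (t : 𝕂) : exp (t • a) * exp ((-t) • a) = 1 := by
  have hball (b : A) : b ∈ Metric.eball 0 (expSeries 𝕂 A).radius :=
    (expSeries_radius_eq_top 𝕂 A).symm ▸ edist_lt_top _ _
  rw [← exp_add_of_commute_of_mem_ball (((Commute.refl a).smul_left t).smul_right (-t))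
    (hball _) (hball _), ← add_smul, add_neg_cancel, zero_smul, exp_zero]

namespace IsConstOnFactorizations

variable {B : A →L[𝕂] A →L[𝕂] M} {S x y : A}

lemma apply_mul_exp_smul_mul (hB : IsConstOnFactorizations B S) (hxy : x * y = S) (a : A)
    (t : 𝕂) : B (x * exp (t • a) * a) (exp ((-t) • a) * y) =
      B (x * exp (t • a)) (exp ((-t) • a) * (a * y)) := by
  have hconst : (fun s : 𝕂 ↦ B (x * exp (s • a)) (exp ((-s) • a) * y)) = fun _ ↦ B 1 S := by
    ext s
    apply hB
    rw [mul_assoc, ← mul_assoc (exp _), exp_smul_mul_exp_neg_smul, one_mul, hxy]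
  have h := hasDerivAt_apply_mul_exp_smul B x y a t
  rw [hconst] at h
  exact sub_eq_zero.mp (h.unique (hasDerivAt_const t _))

lemma apply_mul_left (hB : IsConstOnFactorizations B S) (hxy : x * y = S) (a : A) :
    B (x * a) y = B x (a * y) := by
  simpa using hB.apply_mul_exp_smul_mul hxy a 0

lemma apply_mul_mul_sub (hB : IsConstOnFactorizations B S) (hxy : x * y = S) (a : A) :
    B (x * a * a) y - B (x * a) (a * y) = B (x * a) (a * y) - B x (a * (a * y)) := by
  set B' := B.comp ((mul 𝕂 A).flip a)
  have hfun : (fun s : 𝕂 ↦ B' (x * exp (s • a)) (exp ((-s) • a) * y)) =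
      fun s ↦ B (x * exp (s • a)) (exp ((-s) • a) * (a * y)) :=
    funext fun s ↦ hB.apply_mul_exp_smul_mul hxy a s
  have h := hasDerivAt_apply_mul_exp_smul B' x y a 0
  rw [hfun] at h
  simpa [B'] using h.unique (hasDerivAt_apply_mul_exp_smul B x (a * y) a 0)

lemma apply_mul_mul_eq (hB : IsConstOnFactorizations B S) (hxy : x * y = S) (a : A) :
    B (x * a) (a * y) = B x (a * a * y) := by
  have h := hB.apply_mul_mul_sub hxy a
  rw [mul_assoc x, hB.apply_mul_left hxy, ← mul_assoc a] at h
  have h2 : (2 : 𝕂) • B (x * a) (a * y) = (2 : 𝕂) • B x (a * a * y) := by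
    rw [two_smul, two_smul, ← sub_eq_sub_iff_add_eq_add, h]
  exact smul_right_injective M two_ne_zero h2

end IsConstOnFactorizations

end Factorizations

section TwistedPairing

variable {𝕜 A M : Type*} [NontriviallyNormedField 𝕜] [NormedRing A] [NormedAlgebra 𝕜 A]
  [NormedAddCommGroup M] [NormedSpace 𝕜 M] [Module A M] [Module Aᵐᵒᵖ M]
  [IsScalarTower 𝕜 A M] [IsScalarTower 𝕜 Aᵐᵒᵖ M] [IsBoundedSMul A M] [IsBoundedSMul Aᵐᵒᵖ M]

noncomputable def twistedPairing (σ τ : A →L[𝕜] A) (f : A →L[𝕜] M) : A →L[𝕜] A →L[𝕜] M :=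
  (lsmul 𝕜 A).bilinearComp σ f +
    ((lsmul 𝕜 Aᵐᵒᵖ).bilinearComp ((opContinuousLinearEquiv 𝕜).toContinuousLinearMap.comp τ) f).flip

@[simp]
lemma twistedPairing_apply (σ τ : A →L[𝕜] A) (f : A →L[𝕜] M) (x y : A) :
    twistedPairing σ τ f x y = σ x • f y + op (τ y) • f x :=
  rfl

variable [SMulCommClass A Aᵐᵒᵖ M] {σ τ : A →L[𝕜] A} {f : A →L[𝕜] M} {S : A}

lemma map_smul_apply_one_eq_zero [IsAddTorsionFree A] (hσ : ∀ a, σ (a * a) = σ a * σ a)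
    (hsep : ∀ m : M, op (τ S) • m = 0 → m = 0) (hS : f S = twistedPairing σ τ f 1 S) (y : A) :
    σ y • f 1 = 0 := by
  have he : σ 1 * σ 1 = σ 1 := map_one_mul_map_of_map_mul_self hσ 1
  have hS' : op (τ S) • f 1 = f S - σ 1 • f S := eq_sub_of_add_eq' hS.symm
  have hf1 : σ 1 • f 1 = 0 := by
    refine hsep _ ?_
    rw [← smul_comm (σ 1), hS', smul_sub, smul_smul, he, sub_self]
  rw [← map_mul_map_one_of_map_mul_self hσ y, mul_smul, hf1, smul_zero]

lemma apply_eq_twistedPairing_one_left [IsAddTorsionFree A] (hσ : ∀ a, σ (a * a) = σ a * σ a)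
    (hτmul : ∀ a b, τ (a * b) = τ a * τ b) (hsep : ∀ m : M, op (τ S) • m = 0 → m = 0)
    (hf1 : ∀ y, σ y • f 1 = 0)
    (hΦS : ∀ x, twistedPairing σ τ f x S = twistedPairing σ τ f 1 (x * S)) (x : A) :
    f x = twistedPairing σ τ f 1 x := by
  have hx : op (τ S) • f x = σ 1 • f (x * S) + op (τ (x * S)) • f 1 - σ x • f S := by
    rw [← twistedPairing_apply, ← hΦS, twistedPairing_apply]
    abel
  refine sub_eq_zero.mp (hsep _ ?_)
  rw [twistedPairing_apply, smul_sub, smul_add, ← smul_comm (σ 1), hx, smul_smul, ← op_mul,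
    ← hτmul, smul_sub, smul_add, smul_smul, smul_smul, map_one_mul_map_of_map_mul_self hσ,
    map_one_mul_map_of_map_mul_self hσ, smul_comm (σ 1) (op (τ (x * S))), hf1, smul_zero]
  abel

lemma apply_mul_self_eq_twistedPairing (hσ : ∀ a, σ (a * a) = σ a * σ a)
    (hτmul : ∀ a b, τ (a * b) = τ a * τ b) (hsep : ∀ m : M, op (τ S) • m = 0 → m = 0)
    (hfS : ∀ x, f (x * S) = twistedPairing σ τ f x S) (a : A)
    (ha : twistedPairing σ τ f a (a * S) = f (a * a * S)) :
    f (a * a) = twistedPairing σ τ f a a := by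
  have hr (x : A) : op (τ S) • f x = f (x * S) - σ x • f S := by
    rw [hfS, twistedPairing_apply]
    abel
  refine sub_eq_zero.mp (hsep _ ?_)
  rw [twistedPairing_apply, smul_sub, smul_add, hr, ← smul_comm (σ a), hr, smul_smul, ← op_mul,
    ← hτmul, ← ha, twistedPairing_apply, hσ, smul_sub, mul_smul]
  abel

end TwistedPairing

open MulOpposite in
theorem stmt8_general {A : Type*} [NormedRing A] [NormedAlgebra ℂ A] [CompleteSpace A]
    {M : Type*} [NormedAddCommGroup M] [NormedSpace ℂ M]
    [Module A M] [Module Aᵐᵒᵖ M] [SMulCommClass A Aᵐᵒᵖ M]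
    [IsScalarTower ℂ A M] [IsScalarTower ℂ Aᵐᵒᵖ M]
    [IsBoundedSMul A M] [IsBoundedSMul Aᵐᵒᵖ M]
    (S : A) (τ : A →L[ℂ] A)
    (hτmul : ∀ a b : A, τ (a * b) = τ a * τ b) (hτone : τ 1 = 1)
    (hsep : ∀ m : M, op (τ S) • m = 0 → m = 0)
    (σ : A →L[ℂ] A) (hσ : ∀ a : A, σ (a * a) = σ a * σ a)
    (f : A →L[ℂ] M)
    (hf : ∀ a b : A, a * b = S → f (a * b) = σ a • f b + op (τ b) • f a) :
    (∀ a : A, f (a * a) = σ a • f a + op (τ a) • f a) ∧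
      (∀ a : A, f (S * a) = σ S • f a + op (τ a) • f S) ∧
      (∀ a : A, f (a * S) = σ a • f S + op (τ S) • f a) := by
  have := IsAddTorsionFree.of_isTorsionFree ℂ A
  set Φ := twistedPairing σ τ f
  have hΦ (a b : A) (hab : a * b = S) : Φ a b = f S := by
    rw [twistedPairing_apply, ← hf a b hab, hab]
  have hB : IsConstOnFactorizations Φ S := fun x y h ↦ (hΦ x y h).trans (hΦ 1 S (one_mul S)).symm
  have hf1 : ∀ y, σ y • f 1 = 0 := map_smul_apply_one_eq_zero hσ hsep (hΦ 1 S (one_mul S)).symm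
  have hleft : ∀ x, f x = Φ 1 x := apply_eq_twistedPairing_one_left hσ hτmul hsep hf1
    fun x ↦ by simpa only [one_mul] using hB.apply_mul_left (one_mul S) x
  have hfS (a : A) : f (a * S) = Φ a S := by
    rw [hleft, ← hB.apply_mul_left (one_mul S), one_mul]
  refine ⟨fun a ↦ apply_mul_self_eq_twistedPairing hσ hτmul hsep hfS a ?_, fun a ↦ ?_, hfS⟩
  · simpa only [one_mul, ← hleft] using hB.apply_mul_mul_eq (one_mul S) a
  · have h := hB.apply_mul_left (mul_one S) a
    rw [mul_one, twistedPairing_apply, hf1, hτone, op_one, one_smul, zero_add] at h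
    exact h

open MulOpposite in
/-- Let `A` be a unital complex Banach algebra, `M` a Banach `A`-bimodule, `S ∈ A`,
`τ` a bounded algebra homomorphism with `τ S` a right separating point of `M`,
`σ` a bounded Jordan homomorphism, and `f` a bounded linear map with
`f (a*b) = σ a • f b + f a • τ b` whenever `a * b = S`. Then `f` is a `(σ,τ)`-Jordan
derivation and `f (S*a) = σ S • f a + f S • τ a`, `f (a*S) = σ a • f S + f a • τ S`. -/
theorem stmt8 {A : Type*} [NormedRing A] [NormedAlgebra ℂ A] [CompleteSpace A]
    {M : Type*} [NormedAddCommGroup M] [NormedSpace ℂ M] [CompleteSpace M]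
    [Module A M] [Module Aᵐᵒᵖ M] [SMulCommClass A Aᵐᵒᵖ M]
    [IsScalarTower ℂ A M] [IsScalarTower ℂ Aᵐᵒᵖ M]
    [IsBoundedSMul A M] [IsBoundedSMul Aᵐᵒᵖ M]
    (S : A) (τ : A →L[ℂ] A)
    (hτmul : ∀ a b : A, τ (a * b) = τ a * τ b) (hτone : τ 1 = 1)
    (hsep : ∀ m : M, op (τ S) • m = 0 → m = 0)
    (σ : A →L[ℂ] A) (hσ : ∀ a : A, σ (a * a) = σ a * σ a)
    (f : A →L[ℂ] M)
    (hf : ∀ a b : A, a * b = S → f (a * b) = σ a • f b + op (τ b) • f a) :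
    (∀ a : A, f (a * a) = σ a • f a + op (τ a) • f a) ∧
      (∀ a : A, f (S * a) = σ S • f a + op (τ a) • f S) ∧
      (∀ a : A, f (a * S) = σ a • f S + op (τ S) • f a) :=
  stmt8_general S τ hτmul hτone hsep σ hσ f hf
end
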